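/- arXiv:2312.00893 — 2 statements merged into one kernel-verified Lean document; each statement's English description precedes it below -/
import Mathlib

section
/- Let X be a space with Property (T). Then there exist a matrix A in (A_X^+)_1 and a real number δ with 0 ≤ δ < 1 such that for every representation π of ℂ_u[X] on a complex Hilbert space H, denoting by p_π the orthogonal projection of H onto the subspace H^π of invariant vectors, one has ‖π(A^k) − p_π‖ ≤ δ^k for every integer k ≥ 1. (In particular, the powers A^k form a sequence in (A_X^+)_1 which converges, uniformly over all representations, to the Kazhdan projection.) -/
open scoped ENNReal Classical

noncomputable section

namespace GeomPropT

variable {X : Type*}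

/-- The tube of diameter `R` in `X × X`. -/
def Tube (X : Type*) [EMetricSpace X] (R : ℝ≥0∞) : Set (X × X) :=
  {p : X × X | edist p.1 p.2 ≤ R}

/-- A subset of `X × X` is controlled if it is contained in a tube of finite diameter. -/
def Controlled [EMetricSpace X] (E : Set (X × X)) : Prop :=
  ∃ R : ℝ≥0∞, R < ⊤ ∧ E ⊆ Tube X R

/-- `X` has bounded geometry if balls of any given finite radius have uniformly
bounded cardinality. -/
def BoundedGeometry (X : Type*) [EMetricSpace X] : Prop :=
  ∀ R : ℝ≥0∞, R < ⊤ → ∃ N : ℕ, ∀ x : X,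
    {y : X | edist x y ≤ R}.Finite ∧ {y : X | edist x y ≤ R}.ncard ≤ N

/-- Composition of subsets of `X × X`. -/
def compRel (E F : Set (X × X)) : Set (X × X) :=
  {p : X × X | ∃ z : X, (p.1, z) ∈ E ∧ (z, p.2) ∈ F}

/-- `compPow E n` is the `(n+1)`-fold composition `E^{∘(n+1)}`. -/
def compPow (E : Set (X × X)) : ℕ → Set (X × X)
  | 0 => E
  | n + 1 => compRel E (compPow E n)

/-- A controlled set is generating if every controlled set is contained in some
iterated composition of it. -/
def Generating [EMetricSpace X] (E : Set (X × X)) : Prop :=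
  Controlled E ∧ ∀ F : Set (X × X), Controlled F → ∃ n : ℕ, F ⊆ compPow E n

/-- `X` is monogenic if it admits a controlled generating set. -/
def Monogenic (X : Type*) [EMetricSpace X] : Prop :=
  ∃ E : Set (X × X), Generating E

/-- A "space": bounded geometry, monogenic, with at most countably many coarse
components. -/
structure IsSpace (X : Type*) [EMetricSpace X] : Prop where
  boundedGeometry : BoundedGeometry X
  monogenic : Monogenic X
  countableComponents : Set.Countable {C : Set X | ∃ x : X, C = {y : X | edist x y < ⊤}}

/-- The support of a matrix. -/
def matSupport (T : X → X → ℂ) : Set (X × X) := {p : X × X | T p.1 p.2 ≠ 0}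

/-- Membership in `ℂ_u[X]`: uniformly bounded entries and controlled support. -/
def CuElem [EMetricSpace X] (T : X → X → ℂ) : Prop :=
  (∃ M : ℝ, ∀ x y : X, ‖T x y‖ ≤ M) ∧ Controlled (matSupport T)

/-- The identity matrix. -/
def matOne : X → X → ℂ := fun x y => if x = y then 1 else 0

/-- Matrix multiplication. -/
def matMul (T S : X → X → ℂ) : X → X → ℂ := fun x y => ∑' z : X, T x z * S z y

/-- Matrix adjoint. -/
def matStar (T : X → X → ℂ) : X → X → ℂ := fun x y => starRingEnd ℂ (T y x)

/-- Matrix powers. -/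
def matPow (A : X → X → ℂ) : ℕ → X → X → ℂ
  | 0 => matOne
  | n + 1 => matMul A (matPow A n)

/-- A function `f ∈ ℓ∞(X)` viewed as a diagonal matrix. -/
def diag (f : X → ℂ) : X → X → ℂ := fun x y => if x = y then f x else 0

/-- The matrix of a partial translation: a `{0,1}`-matrix with at most one `1` in
each row and each column, and controlled support. -/
def IsPartialTranslation [EMetricSpace X] (v : X → X → ℂ) : Prop :=
  (∀ x y : X, v x y = 0 ∨ v x y = 1) ∧
  (∀ x y y' : X, v x y = 1 → v x y' = 1 → y = y') ∧
  (∀ x x' y : X, v x y = 1 → v x' y = 1 → x = x') ∧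
  Controlled (matSupport v)

/-- Membership in `S_X`: finite propagation permutation matrices. -/
def IsPermMatrix [EMetricSpace X] (A : X → X → ℂ) : Prop :=
  (∀ x y : X, A x y = 0 ∨ A x y = 1) ∧
  (∀ x : X, ∃! y : X, A x y = 1) ∧
  (∀ y : X, ∃! x : X, A x y = 1) ∧
  Controlled (matSupport A)

/-- Membership in `A_X` with common row/column sum `c`. -/
def MemAX [EMetricSpace X] (A : X → X → ℂ) (c : ℂ) : Prop :=
  CuElem A ∧ ∀ x : X, HasSum (fun y => A x y) c ∧ HasSum (fun y => A y x) c

variable {H : Type*} [NormedAddCommGroup H] [InnerProductSpace ℂ H]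

/-- A representation of `ℂ_u[X]`: a unital `*`-homomorphism into `B(H)`. -/
structure IsRepresentation [EMetricSpace X] [CompleteSpace H]
    (π : (X → X → ℂ) → (H →L[ℂ] H)) : Prop where
  map_one : π matOne = 1
  map_add : ∀ T S : X → X → ℂ, CuElem T → CuElem S → π (T + S) = π T + π S
  map_smul : ∀ (c : ℂ) (T : X → X → ℂ), CuElem T → π (c • T) = c • π T
  map_mul : ∀ T S : X → X → ℂ, CuElem T → CuElem S → π (matMul T S) = π T * π S
  map_star : ∀ T : X → X → ℂ, CuElem T → π (matStar T) = ContinuousLinearMap.adjoint (π T)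

/-- The subspace `H^π` of invariant vectors. -/
def invariantSubmodule [EMetricSpace X] (π : (X → X → ℂ) → (H →L[ℂ] H)) :
    Submodule ℂ H where
  carrier := {ξ : H | ∀ v : X → X → ℂ, IsPartialTranslation v →
    π v ξ = π (matMul v (matStar v)) ξ}
  add_mem' := by
    intro a b ha hb v hv
    simp only [map_add, ha v hv, hb v hv]
  zero_mem' := by
    intro v hv
    simp
  smul_mem' := by
    intro c ξ hξ v hv
    simp only [map_smul, hξ v hv]

/-- `p` is the orthogonal projection onto `S`. -/
def IsOrthoProjOnto (p : H →L[ℂ] H) (S : Submodule ℂ H) : Prop :=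
  ∀ ξ : H, p ξ ∈ S ∧ ξ - p ξ ∈ Sᗮ

/-- Geometric Property (T). -/
def HasPropertyT (X : Type*) [EMetricSpace X] : Prop :=
  ∀ E : Set (X × X), Generating E →
    ∃ c : ℝ, 0 < c ∧
      ∀ (H : Type) [NormedAddCommGroup H] [InnerProductSpace ℂ H] [CompleteSpace H]
        (π : (X → X → ℂ) → (H →L[ℂ] H)), IsRepresentation π →
        ∀ ξ ∈ (invariantSubmodule π)ᗮ,
          ∃ v : X → X → ℂ, IsPartialTranslation v ∧ matSupport v ⊆ E ∧
            c * ‖ξ‖ ≤ ‖π v ξ - π (matMul v (matStar v)) ξ‖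

/-- Bounded functions (elements of `ℓ∞(X)`). -/
def BddFun (f : X → ℂ) : Prop := ∃ M : ℝ, ∀ x : X, ‖f x‖ ≤ M

/-- `f ∘ t`, extended by `0`, where `t` is the partial translation with matrix `v`. -/
def translateFun (v : X → X → ℂ) (f : X → ℂ) : X → ℂ := fun y => ∑' x : X, v x y * f x

/-- An invariant mean on `ℓ∞(X)`: a positive unital linear functional invariant
under partial translations. -/
def IsInvariantMean [EMetricSpace X] (φ : (X → ℂ) → ℂ) : Prop :=
  (∀ f g : X → ℂ, BddFun f → BddFun g → φ (f + g) = φ f + φ g) ∧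
  (∀ (c : ℂ) (f : X → ℂ), BddFun f → φ (c • f) = c * φ f) ∧
  φ (fun _ => 1) = 1 ∧
  (∀ f : X → ℂ, BddFun f → (∀ x, 0 ≤ (f x).re ∧ (f x).im = 0) →
    0 ≤ (φ f).re ∧ (φ f).im = 0) ∧
  (∀ f : X → ℂ, BddFun f → ∀ v : X → X → ℂ, IsPartialTranslation v →
    (∀ x : X, f x ≠ 0 → ∃ y : X, v x y = 1) → φ (translateFun v f) = φ f)

/-- `X` is amenable if `ℓ∞(X)` admits an invariant mean. -/
def IsAmenable (X : Type*) [EMetricSpace X] : Prop :=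
  ∃ φ : (X → ℂ) → ℂ, IsInvariantMean φ

/-- A representation of `ℂ_u[X]` bundled with its Hilbert space. -/
structure HilbertRep (X : Type*) [EMetricSpace X] where
  H : Type
  [nacg : NormedAddCommGroup H]
  [ips : InnerProductSpace ℂ H]
  [cs : CompleteSpace H]
  π : (X → X → ℂ) → (H →L[ℂ] H)
  rep : IsRepresentation π

attribute [instance] HilbertRep.nacg HilbertRep.ips HilbertRep.cs


/-!
Bounded geometry lets one cover a controlled generating set `E` by finitely many partial
matchings `S₁, …, Sₘ`; let `vᵢ` be their partial translations and `bᵢ = vᵢ vᵢ* - vᵢ`.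
The matrix `A = 1 - (4m)⁻¹ ∑ bᵢ* bᵢ` is symmetric with nonnegative entries and row sums `1`.
In a representation `π`, each `π bᵢ` has norm at most `2` and kills the invariant vectors, so
`T = π A` is a positive operator fixing `H^π`. Any partial translation `v` supported in `E` is
glued row by row from pieces of the `vᵢ`, hence `‖π(v v* - v) ξ‖ ≤ ∑ ‖π bᵢ ξ‖`, and Property (T)
with Cauchy–Schwarz gives `⟪T ξ, ξ⟫ ≤ (1 - c² / 4m²) ‖ξ‖²` on `(H^π)ᗮ`. A positive operator
whose quadratic form is bounded by `δ` on an invariant subspace has norm at most `δ` there, so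
`‖π (A ^ k) - p_π‖ = ‖(T (1 - p_π)) ^ k‖ ≤ δ ^ k`.
-/

section Controlled
variable [EMetricSpace X]

theorem tube_mono {R R' : ℝ≥0∞} (h : R ≤ R') : Tube X R ⊆ Tube X R' :=
  fun _ hp => le_trans hp h

theorem Controlled.mono {E F : Set (X × X)} (hE : Controlled E) (h : F ⊆ E) : Controlled F :=
  let ⟨R, hR, hsub⟩ := hE
  ⟨R, hR, h.trans hsub⟩

theorem Controlled.union {E F : Set (X × X)} (hE : Controlled E) (hF : Controlled F) :
    Controlled (E ∪ F) := by
  obtain ⟨R, hR, hE⟩ := hE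
  obtain ⟨R', hR', hF⟩ := hF
  exact ⟨max R R', max_lt hR hR', Set.union_subset (hE.trans (tube_mono (le_max_left _ _)))
    (hF.trans (tube_mono (le_max_right _ _)))⟩

theorem controlled_diagonal : Controlled {p : X × X | p.1 = p.2} :=
  ⟨0, ENNReal.zero_lt_top, fun p (hp : p.1 = p.2) => by simp [Tube, hp]⟩

theorem Controlled.preimage_swap {E : Set (X × X)} (hE : Controlled E) :
    Controlled (Prod.swap ⁻¹' E) := by
  obtain ⟨R, hR, hsub⟩ := hE
  exact ⟨R, hR, fun p hp => by simpa [Tube, edist_comm] using hsub hp⟩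

theorem Controlled.compRel {E F : Set (X × X)} (hE : Controlled E) (hF : Controlled F) :
    Controlled (compRel E F) := by
  obtain ⟨R, hR, hE⟩ := hE
  obtain ⟨R', hR', hF⟩ := hF
  refine ⟨R + R', ENNReal.add_lt_top.2 ⟨hR, hR'⟩, ?_⟩
  rintro ⟨x, y⟩ ⟨z, hxz, hzy⟩
  exact (edist_triangle x z y).trans (add_le_add (hE hxz) (hF hzy))

theorem BoundedGeometry.exists_row_ncard_le (hBG : BoundedGeometry X) {E : Set (X × X)}
    (hE : Controlled E) :
    ∃ N : ℕ, ∀ x : X, {y | (x, y) ∈ E}.Finite ∧ {y | (x, y) ∈ E}.ncard ≤ N := by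
  obtain ⟨R, hR, hsub⟩ := hE
  obtain ⟨N, hN⟩ := hBG R hR
  refine ⟨N, fun x => ?_⟩
  have hball : {y | (x, y) ∈ E} ⊆ {y | edist x y ≤ R} := fun _ hy => hsub hy
  exact ⟨(hN x).1.subset hball, (Set.ncard_le_ncard hball (hN x).1).trans (hN x).2⟩

theorem BoundedGeometry.exists_col_ncard_le (hBG : BoundedGeometry X) {E : Set (X × X)}
    (hE : Controlled E) :
    ∃ N : ℕ, ∀ y : X, {x | (x, y) ∈ E}.Finite ∧ {x | (x, y) ∈ E}.ncard ≤ N :=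
  hBG.exists_row_ncard_le hE.preimage_swap

end Controlled

section UniformAlgebra
variable [EMetricSpace X]

theorem cuElem_of_support_subset {T : X → X → ℂ} {M : ℝ} (hM : ∀ x y, ‖T x y‖ ≤ M)
    {E : Set (X × X)} (hE : Controlled E) (hsupp : matSupport T ⊆ E) : CuElem T :=
  ⟨⟨M, hM⟩, hE.mono hsupp⟩

theorem cuElem_one : CuElem (matOne : X → X → ℂ) := by
  refine cuElem_of_support_subset (M := 1) (fun x y => ?_) controlled_diagonal fun p hp => ?_
  · by_cases h : x = y <;> simp [matOne, h]
  · by_contra h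
    exact hp (if_neg h)

theorem CuElem.add {T S : X → X → ℂ} (hT : CuElem T) (hS : CuElem S) : CuElem (T + S) := by
  obtain ⟨⟨M, hM⟩, hTc⟩ := hT
  obtain ⟨⟨M', hM'⟩, hSc⟩ := hS
  refine cuElem_of_support_subset
    (fun x y => (norm_add_le _ _).trans (add_le_add (hM x y) (hM' x y))) (hTc.union hSc)
    fun p hp => ?_
  by_contra h
  simp only [Set.mem_union, matSupport, Set.mem_ofPred_eq, not_or, not_not] at h
  exact hp (by simp [h.1, h.2])

theorem CuElem.smul {T : X → X → ℂ} (hT : CuElem T) (c : ℂ) : CuElem (c • T) := by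
  obtain ⟨⟨M, hM⟩, hTc⟩ := hT
  refine cuElem_of_support_subset (M := ‖c‖ * M) (fun x y => ?_) hTc
    fun p hp h => hp (by simp [h])
  rw [Pi.smul_apply, Pi.smul_apply, norm_smul]
  exact mul_le_mul_of_nonneg_left (hM x y) (norm_nonneg c)

theorem CuElem.sub {T S : X → X → ℂ} (hT : CuElem T) (hS : CuElem S) : CuElem (T - S) := by
  simpa [sub_eq_add_neg] using hT.add (hS.smul (-1))

theorem cuElem_zero : CuElem (0 : X → X → ℂ) := by
  simpa using cuElem_one.smul 0

theorem cuElem_sum {ι : Type*} (s : Finset ι) {T : ι → X → X → ℂ} (hT : ∀ i, CuElem (T i)) :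
    CuElem (∑ i ∈ s, T i) := by
  classical
  induction s using Finset.induction_on with
  | empty => simpa using cuElem_zero
  | insert a s ha ih => simpa [Finset.sum_insert ha] using (hT a).add ih

theorem CuElem.matStar {T : X → X → ℂ} (hT : CuElem T) : CuElem (matStar T) := by
  obtain ⟨⟨M, hM⟩, hTc⟩ := hT
  exact cuElem_of_support_subset (fun x y => by simpa [GeomPropT.matStar] using hM y x)
    hTc.preimage_swap fun p hp h => hp (by simpa [GeomPropT.matStar] using h)

theorem CuElem.matMul (hBG : BoundedGeometry X) {T S : X → X → ℂ} (hT : CuElem T)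
    (hS : CuElem S) : CuElem (matMul T S) := by
  obtain ⟨N, hN⟩ := hBG.exists_row_ncard_le hT.2
  obtain ⟨⟨M, hM⟩, hTc⟩ := hT
  obtain ⟨⟨M', hM'⟩, hSc⟩ := hS
  refine cuElem_of_support_subset (M := N * (M * M')) (fun x y => ?_) (hTc.compRel hSc)
    fun p hp => ?_
  · obtain ⟨hfin, hcard⟩ := hN x
    have hM0 : 0 ≤ M := (norm_nonneg _).trans (hM x x)
    have hM'0 : 0 ≤ M' := (norm_nonneg _).trans (hM' x x)
    have heq : GeomPropT.matMul T S x y = ∑ z ∈ hfin.toFinset, T x z * S z y :=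
      tsum_eq_sum fun z hz => by
        simp only [Set.Finite.mem_toFinset, Set.mem_ofPred_eq, matSupport, not_not] at hz
        simp [hz]
    rw [heq]
    calc ‖∑ z ∈ hfin.toFinset, T x z * S z y‖ ≤ ∑ _z ∈ hfin.toFinset, M * M' :=
          (norm_sum_le _ _).trans (Finset.sum_le_sum fun z _ => by
            rw [norm_mul]; exact mul_le_mul (hM x z) (hM' z y) (norm_nonneg _) hM0)
      _ ≤ N * (M * M') := by
          rw [Finset.sum_const, nsmul_eq_mul, ← Set.ncard_eq_toFinset_card _ hfin]
          gcongr
  · by_contra h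
    have hterm : ∀ z, T p.1 z * S z p.2 = 0 := fun z => by
      by_contra hz
      exact h ⟨z, left_ne_zero_of_mul hz, right_ne_zero_of_mul hz⟩
    exact hp (by simp [GeomPropT.matMul, hterm])

theorem CuElem.matPow (hBG : BoundedGeometry X) {A : X → X → ℂ} (hA : CuElem A) :
    ∀ k : ℕ, CuElem (matPow A k)
  | 0 => cuElem_one
  | k + 1 => hA.matMul hBG (hA.matPow hBG k)

theorem cuElem_diag {f : X → ℂ} {M : ℝ} (hf : ∀ x, ‖f x‖ ≤ M) : CuElem (diag f) := by
  refine cuElem_of_support_subset (M := M) (fun x y => ?_) controlled_diagonal fun p hp => ?_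
  · by_cases h : x = y
    · simpa [diag, h] using hf y
    · simpa [diag, h] using (norm_nonneg _).trans (hf x)
  · by_contra h
    exact hp (if_neg h)

end UniformAlgebra

namespace IsRepresentation
variable [EMetricSpace X] [CompleteSpace H] {π : (X → X → ℂ) → (H →L[ℂ] H)}

theorem map_zero (hπ : IsRepresentation π) : π 0 = 0 := by
  simpa using hπ.map_smul 0 matOne cuElem_one

theorem map_sub (hπ : IsRepresentation π) {T S : X → X → ℂ} (hT : CuElem T) (hS : CuElem S) :
    π (T - S) = π T - π S := by
  have h := hπ.map_add T ((-1 : ℂ) • S) hT (hS.smul _)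
  rw [hπ.map_smul _ _ hS] at h
  simpa [sub_eq_add_neg] using h

theorem map_sum (hπ : IsRepresentation π) {ι : Type*} (s : Finset ι) {T : ι → X → X → ℂ}
    (hT : ∀ i, CuElem (T i)) : π (∑ i ∈ s, T i) = ∑ i ∈ s, π (T i) := by
  classical
  induction s using Finset.induction_on with
  | empty => simpa using hπ.map_zero
  | insert a s ha ih =>
    rw [Finset.sum_insert ha, Finset.sum_insert ha, hπ.map_add _ _ (hT a) (cuElem_sum s hT), ih]

theorem map_matStar (hπ : IsRepresentation π) {T : X → X → ℂ} (hT : CuElem T) :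
    π (matStar T) = star (π T) := by
  rw [hπ.map_star T hT, ContinuousLinearMap.star_eq_adjoint]

theorem map_matPow (hπ : IsRepresentation π) (hBG : BoundedGeometry X) {A : X → X → ℂ}
    (hA : CuElem A) : ∀ k : ℕ, π (matPow A k) = π A ^ k
  | 0 => by rw [pow_zero, ← hπ.map_one]; rfl
  | k + 1 => by
    rw [pow_succ', ← hπ.map_matPow hBG hA k, ← hπ.map_mul _ _ hA (hA.matPow hBG k)]
    rfl

theorem isStarProjection_map (hπ : IsRepresentation π) {e : X → X → ℂ} (he : CuElem e)
    (hstar : matStar e = e) (hidem : matMul e e = e) : IsStarProjection (π e) :=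
  ⟨by rw [IsIdempotentElem, ← hπ.map_mul e e he he, hidem],
    by rw [IsSelfAdjoint, ← hπ.map_matStar he, hstar]⟩

end IsRepresentation

section Indicators

def ind (S : Set (X × X)) : X → X → ℂ := fun x y => if (x, y) ∈ S then 1 else 0

def rowInd (S : Set (X × X)) : X → ℂ := fun x => if ∃ y, (x, y) ∈ S then 1 else 0

def colInd (S : Set (X × X)) : X → ℂ := rowInd (Prod.swap ⁻¹' S)

/-- The matrix `v v* - v` of the partial translation `v = ind S`. -/
def defectMat (S : Set (X × X)) : X → X → ℂ := diag (rowInd S) - ind S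

theorem ind_eq_zero_or_eq_one (S : Set (X × X)) (x y : X) : ind S x y = 0 ∨ ind S x y = 1 := by
  unfold ind; split_ifs <;> simp

theorem rowInd_eq_zero_or_eq_one (S : Set (X × X)) (x : X) :
    rowInd S x = 0 ∨ rowInd S x = 1 := by
  unfold rowInd; split_ifs <;> simp

theorem conj_of_eq_zero_or_eq_one {z : ℂ} (hz : z = 0 ∨ z = 1) : starRingEnd ℂ z = z := by
  rcases hz with rfl | rfl <;> simp

theorem matSupport_ind (S : Set (X × X)) : matSupport (ind S) = S := by
  ext p
  by_cases h : p ∈ S <;> simp [matSupport, ind, h]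

theorem matStar_ind (S : Set (X × X)) : matStar (ind S) = ind (Prod.swap ⁻¹' S) := by
  ext x y
  exact conj_of_eq_zero_or_eq_one (ind_eq_zero_or_eq_one S y x)

theorem matMul_diag_left (f : X → ℂ) (T : X → X → ℂ) :
    matMul (diag f) T = fun x y => f x * T x y := by
  ext x y
  refine (tsum_eq_single x fun z hz => ?_).trans (by simp [diag])
  simp [diag, Ne.symm hz]

theorem rowInd_mul_ind (S : Set (X × X)) (x y : X) : rowInd S x * ind S x y = ind S x y := by
  by_cases h : (x, y) ∈ S
  · simp [ind, h, rowInd, show ∃ z, (x, z) ∈ S from ⟨y, h⟩]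
  · simp [ind, h]

theorem rowInd_mul_self (S : Set (X × X)) (x : X) : rowInd S x * rowInd S x = rowInd S x := by
  rcases rowInd_eq_zero_or_eq_one S x with h | h <;> simp [h]

theorem conj_defectMat (S : Set (X × X)) (x y : X) :
    starRingEnd ℂ (defectMat S x y) = defectMat S x y := by
  simp only [defectMat, diag, Pi.sub_apply, map_sub,
    conj_of_eq_zero_or_eq_one (ind_eq_zero_or_eq_one S x y)]
  split_ifs <;> simp [conj_of_eq_zero_or_eq_one (rowInd_eq_zero_or_eq_one S x)]

theorem defectMat_apply_eq_zero {S : Set (X × X)} {x : X} (h : ∀ y, (x, y) ∉ S) (y : X) :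
    defectMat S x y = 0 := by
  simp [defectMat, diag, rowInd, ind, h]

end Indicators

section PartialMatching
variable [EMetricSpace X]

structure IsPartialMatching (S : Set (X × X)) : Prop where
  row_unique : ∀ x y y' : X, (x, y) ∈ S → (x, y') ∈ S → y = y'
  col_unique : ∀ x x' y : X, (x, y) ∈ S → (x', y) ∈ S → x = x'
  controlled : Controlled S

theorem IsPartialMatching.preimage_swap {S : Set (X × X)} (hS : IsPartialMatching S) :
    IsPartialMatching (Prod.swap ⁻¹' S) :=
  ⟨fun x y y' h h' => hS.col_unique y y' x h h', fun x x' y h h' => hS.row_unique y x x' h h',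
    hS.controlled.preimage_swap⟩

theorem cuElem_diag_of_eq_zero_or_eq_one {e : X → ℂ} (he : ∀ x, e x = 0 ∨ e x = 1) :
    CuElem (diag e) :=
  cuElem_diag (M := 1) fun x => by rcases he x with h | h <;> simp [h]

theorem cuElem_ind {S : Set (X × X)} (hS : Controlled S) : CuElem (ind S) :=
  cuElem_of_support_subset (M := 1)
    (fun x y => by rcases ind_eq_zero_or_eq_one S x y with h | h <;> simp [h])
    hS (matSupport_ind S).subset

theorem IsPartialMatching.isPartialTranslation {S : Set (X × X)} (hS : IsPartialMatching S) :
    IsPartialTranslation (ind S) := by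
  have hone : ∀ x y, ind S x y = 1 → (x, y) ∈ S := fun x y => by
    by_cases h : (x, y) ∈ S <;> simp [ind, h]
  refine ⟨ind_eq_zero_or_eq_one S, fun x y y' h h' => ?_, fun x x' y h h' => ?_, ?_⟩
  · exact hS.row_unique x y y' (hone x y h) (hone x y' h')
  · exact hS.col_unique x x' y (hone x y h) (hone x' y h')
  · rw [matSupport_ind]; exact hS.controlled

theorem cuElem_defectMat {S : Set (X × X)} (hS : IsPartialMatching S) : CuElem (defectMat S) :=
  (cuElem_diag_of_eq_zero_or_eq_one (rowInd_eq_zero_or_eq_one S)).sub (cuElem_ind hS.controlled)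

theorem IsPartialTranslation.eq_ind {v : X → X → ℂ} (hv : IsPartialTranslation v) :
    v = ind (matSupport v) := by
  ext x y
  rcases hv.1 x y with h | h <;> simp [ind, matSupport, h]

theorem IsPartialTranslation.isPartialMatching {v : X → X → ℂ} (hv : IsPartialTranslation v) :
    IsPartialMatching (matSupport v) := by
  have hone : ∀ x y, (x, y) ∈ matSupport v → v x y = 1 := fun x y h =>
    (hv.1 x y).resolve_left h
  exact ⟨fun x y y' h h' => hv.2.1 x y y' (hone _ _ h) (hone _ _ h'),
    fun x x' y h h' => hv.2.2.1 x x' y (hone _ _ h) (hone _ _ h'), hv.2.2.2⟩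

theorem IsPartialMatching.hasSum_ind_row {S : Set (X × X)} (hS : IsPartialMatching S) (x : X) :
    HasSum (fun y => ind S x y) (rowInd S x) := by
  by_cases h : ∃ y, (x, y) ∈ S
  · obtain ⟨y₀, hy₀⟩ := h
    have : (fun y => ind S x y) = fun y => if y = y₀ then 1 else 0 := by
      ext y
      by_cases hy : y = y₀
      · simp [ind, hy, hy₀]
      · have : (x, y) ∉ S := fun h => hy (hS.row_unique x y y₀ h hy₀)
        simp [ind, hy, this]
    rw [this, show rowInd S x = 1 from if_pos ⟨y₀, hy₀⟩]
    exact hasSum_ite_eq y₀ 1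
  · push Not at h
    simp [ind, rowInd, h, hasSum_zero]

theorem IsPartialMatching.hasSum_ind_col {S : Set (X × X)} (hS : IsPartialMatching S) (y : X) :
    HasSum (fun x => ind S x y) (colInd S y) :=
  hS.preimage_swap.hasSum_ind_row y

theorem IsPartialMatching.hasSum_ind_mul_ind_row {S : Set (X × X)} (hS : IsPartialMatching S)
    (x y : X) :
    HasSum (fun z => ind S x z * ind S y z) (if x = y then rowInd S x else 0) := by
  by_cases hxy : x = y
  · subst hxy
    have hsq : ∀ z, ind S x z * ind S x z = ind S x z := fun z => by
      rcases ind_eq_zero_or_eq_one S x z with h | h <;> simp [h]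
    simpa [hsq] using hS.hasSum_ind_row x
  · have : ∀ z, ind S x z * ind S y z = 0 := fun z => by
      by_cases h : (x, z) ∈ S <;> by_cases h' : (y, z) ∈ S <;> simp [ind, h, h']
      exact hxy (hS.col_unique x y z h h')
    simp [hxy, this, hasSum_zero]

theorem IsPartialMatching.matMul_ind_matStar {S : Set (X × X)} (hS : IsPartialMatching S) :
    matMul (ind S) (matStar (ind S)) = diag (rowInd S) := by
  ext x y
  rw [matStar_ind]
  exact (hS.hasSum_ind_mul_ind_row x y).tsum_eq

theorem IsPartialMatching.matStar_defectMat_mul_apply {S : Set (X × X)}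
    (hS : IsPartialMatching S) (x y : X) :
    matMul (matStar (defectMat S)) (defectMat S) x y =
      (if x = y then rowInd S x + colInd S x else 0) - ind S x y - ind S y x := by
  have hterm : ∀ z, matStar (defectMat S) x z * defectMat S z y =
      (if z = x then (if x = y then rowInd S x else 0) else 0) - (if z = x then ind S x y else 0)
        - (if z = y then ind S y x else 0) + ind S z x * ind S z y := by
    intro z
    rw [GeomPropT.matStar, conj_defectMat]
    simp only [defectMat, diag, Pi.sub_apply]
    by_cases hzx : z = x
    · subst hzx
      by_cases hzy : z = y
      · subst hzy
        simp only [if_true]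
        linear_combination rowInd_mul_self S z - 2 * rowInd_mul_ind S z z
      · simp only [if_true, if_neg hzy]
        linear_combination -rowInd_mul_ind S z y
    · by_cases hzy : z = y
      · subst hzy
        simp only [if_true, if_neg hzx]
        linear_combination -rowInd_mul_ind S z x
      · simp only [if_neg hzx, if_neg hzy]
        ring
  have hsum := (((hasSum_ite_eq x (if x = y then rowInd S x else 0)).sub
    (hasSum_ite_eq x (ind S x y))).sub (hasSum_ite_eq y (ind S y x))).add
    (hS.preimage_swap.hasSum_ind_mul_ind_row x y)
  rw [show matMul (matStar (defectMat S)) (defectMat S) x y = ∑' z, _ from rfl]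
  rw [tsum_congr hterm]
  refine hsum.tsum_eq.trans ?_
  split_ifs
  · simp only [colInd]; ring
  · simp only [add_zero]

end PartialMatching

section Cover

theorem exists_injOn_fin_of_ncard_le {α : Type*} {s : Set α} (hs : s.Finite) {N : ℕ}
    (hN : s.ncard ≤ N) : ∃ f : α → Fin (N + 1), Set.InjOn f s := by
  obtain ⟨f, -, hf⟩ := hs.exists_injOn_of_encard_le (t := (Set.univ : Set (Fin (N + 1)))) (by
    rw [← hs.cast_ncard_eq, Set.encard_univ, ENat.card_eq_coe_fintype_card, Fintype.card_fin]
    exact_mod_cast hN.trans (Nat.le_succ N))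
  exact ⟨f, hf⟩

theorem BoundedGeometry.exists_partialMatching_cover [EMetricSpace X] (hBG : BoundedGeometry X)
    {E : Set (X × X)} (hE : Controlled E) :
    ∃ N : ℕ, ∃ S : Fin (N + 1) × Fin (N + 1) → Set (X × X),
      (∀ i, IsPartialMatching (S i)) ∧ E ⊆ ⋃ i, S i := by
  obtain ⟨N₁, hN₁⟩ := hBG.exists_row_ncard_le hE
  obtain ⟨N₂, hN₂⟩ := hBG.exists_col_ncard_le hE
  have hrow : ∀ x, ∃ f : X → Fin (max N₁ N₂ + 1), Set.InjOn f {y | (x, y) ∈ E} := fun x =>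
    exists_injOn_fin_of_ncard_le (hN₁ x).1 ((hN₁ x).2.trans (le_max_left _ _))
  have hcol : ∀ y, ∃ f : X → Fin (max N₁ N₂ + 1), Set.InjOn f {x | (x, y) ∈ E} := fun y =>
    exists_injOn_fin_of_ncard_le (hN₂ y).1 ((hN₂ y).2.trans (le_max_right _ _))
  choose ρ hρ using hrow
  choose σ hσ using hcol
  -- `(x, y) ∈ E` gets the colour (label of `y` in row `x`, label of `x` in column `y`).
  refine ⟨max N₁ N₂, fun i => {p | p ∈ E ∧ ρ p.1 p.2 = i.1 ∧ σ p.2 p.1 = i.2},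
    fun i => ⟨?_, ?_, ?_⟩, ?_⟩
  · rintro x y y' ⟨hy, hρy, -⟩ ⟨hy', hρy', -⟩
    exact hρ x hy hy' (hρy.trans hρy'.symm)
  · rintro x x' y ⟨hx, -, hσx⟩ ⟨hx', -, hσx'⟩
    exact hσ y hx hx' (hσx.trans hσx'.symm)
  · exact hE.mono fun p hp => hp.1
  · exact fun p hp => Set.mem_iUnion.2 ⟨(ρ p.1 p.2, σ p.2 p.1), hp, rfl, rfl⟩

end Cover

section DefectRepresentation
variable [EMetricSpace X] [CompleteSpace H] {π : (X → X → ℂ) → (H →L[ℂ] H)}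

theorem IsRepresentation.norm_map_diag_le_one (hπ : IsRepresentation π) {e : X → ℂ}
    (he : ∀ x, e x = 0 ∨ e x = 1) : ‖π (diag e)‖ ≤ 1 := by
  refine (hπ.isStarProjection_map (cuElem_diag_of_eq_zero_or_eq_one he) ?_ ?_).norm_le
  · ext x y
    by_cases h : x = y
    · subst h; simp [GeomPropT.matStar, diag, conj_of_eq_zero_or_eq_one (he x)]
    · simp [GeomPropT.matStar, diag, h, Ne.symm h]
  · rw [matMul_diag_left]
    ext x y
    by_cases h : x = y
    · subst h; rcases he x with h | h <;> simp [diag, h]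
    · simp [diag, h]

theorem IsRepresentation.norm_map_ind_le_one (hπ : IsRepresentation π) {S : Set (X × X)}
    (hS : IsPartialMatching S) : ‖π (ind S)‖ ≤ 1 := by
  have hind := cuElem_ind hS.controlled
  have h := hπ.norm_map_diag_le_one (rowInd_eq_zero_or_eq_one S)
  rw [← hS.matMul_ind_matStar, hπ.map_mul _ _ hind hind.matStar, hπ.map_matStar hind,
    CStarRing.norm_self_mul_star] at h
  nlinarith [norm_nonneg (π (ind S))]

theorem IsRepresentation.map_defectMat (hπ : IsRepresentation π) {S : Set (X × X)}
    (hS : IsPartialMatching S) :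
    π (defectMat S) = π (matMul (ind S) (matStar (ind S))) - π (ind S) := by
  rw [hS.matMul_ind_matStar]
  exact hπ.map_sub (cuElem_diag_of_eq_zero_or_eq_one (rowInd_eq_zero_or_eq_one S))
    (cuElem_ind hS.controlled)

theorem IsRepresentation.norm_map_defectMat_le (hπ : IsRepresentation π) {S : Set (X × X)}
    (hS : IsPartialMatching S) : ‖π (defectMat S)‖ ≤ 2 := by
  rw [hπ.map_defectMat hS, hS.matMul_ind_matStar]
  calc _ ≤ ‖π (diag (rowInd S))‖ + ‖π (ind S)‖ := norm_sub_le _ _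
    _ ≤ 1 + 1 := add_le_add (hπ.norm_map_diag_le_one (rowInd_eq_zero_or_eq_one S))
        (hπ.norm_map_ind_le_one hS)
    _ = 2 := by norm_num

theorem IsRepresentation.map_defectMat_apply_eq_zero (hπ : IsRepresentation π)
    {S : Set (X × X)} (hS : IsPartialMatching S) {ξ : H} (hξ : ξ ∈ invariantSubmodule π) :
    π (defectMat S) ξ = 0 := by
  rw [hπ.map_defectMat hS, sub_apply, ← hξ _ hS.isPartialTranslation, sub_self]

theorem IsRepresentation.norm_sub_map_mul_matStar_apply (hπ : IsRepresentation π)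
    {v : X → X → ℂ} (hv : IsPartialTranslation v) (ξ : H) :
    ‖π v ξ - π (matMul v (matStar v)) ξ‖ = ‖π (defectMat (matSupport v)) ξ‖ := by
  rw [hπ.map_defectMat hv.isPartialMatching, ← hv.eq_ind, sub_apply, norm_sub_rev]

end DefectRepresentation

section Decomposition
variable [EMetricSpace X] {ι : Type*} [Fintype ι]

theorem defectMat_apply_eq_of_mem {S T : Set (X × X)} (hS : IsPartialMatching S)
    (hT : IsPartialMatching T) {x y₀ : X} (hS₀ : (x, y₀) ∈ S) (hT₀ : (x, y₀) ∈ T) (y : X) :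
    defectMat S x y = defectMat T x y := by
  have hmem : (x, y) ∈ S ↔ (x, y) ∈ T :=
    ⟨fun h => hS.row_unique x y y₀ h hS₀ ▸ hT₀, fun h => hT.row_unique x y y₀ h hT₀ ▸ hS₀⟩
  simp [defectMat, diag, rowInd, ind, hmem, show ∃ z, (x, z) ∈ S from ⟨y₀, hS₀⟩,
    show ∃ z, (x, z) ∈ T from ⟨y₀, hT₀⟩]

theorem defectMat_eq_sum {S' : Set (X × X)} {S : ι → Set (X × X)} (hS' : IsPartialMatching S')
    (hS : ∀ i, IsPartialMatching (S i)) (idx : X → ι)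
    (hidx : ∀ x y, (x, y) ∈ S' → (x, y) ∈ S (idx x)) :
    defectMat S' =
      ∑ i, matMul (diag fun x => if idx x = i then rowInd S' x else 0) (defectMat (S i)) := by
  ext x y
  simp only [Finset.sum_apply, matMul_diag_left, ite_mul, zero_mul, Finset.sum_ite_eq,
    Finset.mem_univ, if_true]
  by_cases h : ∃ y₀, (x, y₀) ∈ S'
  · obtain ⟨y₀, hy₀⟩ := h
    rw [show rowInd S' x = 1 from if_pos ⟨y₀, hy₀⟩, one_mul]
    exact defectMat_apply_eq_of_mem hS' (hS _) hy₀ (hidx x y₀ hy₀) y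
  · push Not at h
    rw [defectMat_apply_eq_zero h, show rowInd S' x = 0 from if_neg (by simpa using h), zero_mul]

end Decomposition

section SpectralGap
variable [EMetricSpace X] {ι : Type*} [Fintype ι] [Nonempty ι]

theorem IsRepresentation.norm_map_defectMat_apply_le_sum [CompleteSpace H]
    {π : (X → X → ℂ) → (H →L[ℂ] H)} (hπ : IsRepresentation π) (hBG : BoundedGeometry X)
    {S' : Set (X × X)} {S : ι → Set (X × X)} (hS' : IsPartialMatching S')
    (hS : ∀ i, IsPartialMatching (S i)) (hcover : S' ⊆ ⋃ i, S i) (ξ : H) :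
    ‖π (defectMat S') ξ‖ ≤ ∑ i, ‖π (defectMat (S i)) ξ‖ := by
  have hrow : ∀ x, ∃ i, ∀ y, (x, y) ∈ S' → (x, y) ∈ S i := by
    intro x
    by_cases h : ∃ y₀, (x, y₀) ∈ S'
    · obtain ⟨y₀, hy₀⟩ := h
      obtain ⟨i, hi⟩ := Set.mem_iUnion.1 (hcover hy₀)
      exact ⟨i, fun y hy => hS'.row_unique x y y₀ hy hy₀ ▸ hi⟩
    · push Not at h
      exact ⟨Classical.arbitrary ι, fun y hy => absurd hy (h y)⟩
  choose idx hidx using hrow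
  set e : ι → X → ℂ := fun i x => if idx x = i then rowInd S' x else 0
  have he : ∀ i x, e i x = 0 ∨ e i x = 1 := fun i x => by
    simp only [e]; split_ifs
    exacts [rowInd_eq_zero_or_eq_one S' x, Or.inl rfl]
  have hdiag : ∀ i, CuElem (diag (e i)) := fun i => cuElem_diag_of_eq_zero_or_eq_one (he i)
  have hdefect : ∀ i, CuElem (defectMat (S i)) := fun i => cuElem_defectMat (hS i)
  rw [defectMat_eq_sum hS' hS idx hidx, hπ.map_sum _ fun i => (hdiag i).matMul hBG (hdefect i),
    sum_apply]
  refine (norm_sum_le _ _).trans (Finset.sum_le_sum fun i _ => ?_)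
  rw [hπ.map_mul _ _ (hdiag i) (hdefect i)]
  exact ((π (diag (e i))).le_of_opNorm_le (hπ.norm_map_diag_le_one (he i)) _).trans_eq
    (one_mul _)

theorem HasPropertyT.exists_pos_le_sum_norm_map_defectMat (hT : HasPropertyT X)
    (hBG : BoundedGeometry X) {E : Set (X × X)} (hE : Generating E) {S : ι → Set (X × X)}
    (hS : ∀ i, IsPartialMatching (S i)) (hcover : E ⊆ ⋃ i, S i) :
    ∃ c > 0, ∀ (H : Type) [NormedAddCommGroup H] [InnerProductSpace ℂ H] [CompleteSpace H]
      (π : (X → X → ℂ) → (H →L[ℂ] H)), IsRepresentation π →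
      ∀ ξ ∈ (invariantSubmodule π)ᗮ, c * ‖ξ‖ ≤ ∑ i, ‖π (defectMat (S i)) ξ‖ := by
  obtain ⟨c, hc, hgap⟩ := hT E hE
  refine ⟨c, hc, fun H _ _ _ π hπ ξ hξ => ?_⟩
  obtain ⟨v, hv, hvE, hcv⟩ := hgap H π hπ ξ hξ
  rw [hπ.norm_sub_map_mul_matStar_apply hv] at hcv
  exact hcv.trans (hπ.norm_map_defectMat_apply_le_sum hBG hv.isPartialMatching hS
    (hvE.trans hcover) ξ)

end SpectralGap

section Compression
variable [CompleteSpace H]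
open ContinuousLinearMap

theorem norm_mul_starProjection_le (L : Submodule ℂ H) [L.HasOrthogonalProjection]
    {T : H →L[ℂ] H} {δ : ℝ} (hδ : 0 ≤ δ) (hT : T.IsPositive)
    (hcomm : Commute T L.starProjection)
    (hle : ∀ ξ ∈ L, RCLike.re (inner ℂ (T ξ) ξ) ≤ δ * ‖ξ‖ ^ 2) :
    ‖T * L.starProjection‖ ≤ δ := by
  set q := L.starProjection
  have hq : IsStarProjection q := isStarProjection_starProjection
  have hconj : T * q = q * T * q := by
    rw [← hcomm.eq, mul_assoc, hq.isIdempotentElem.eq]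
  have hnonneg : 0 ≤ T * q := by
    rw [hconj]; exact hq.isSelfAdjoint.conjugate_nonneg ((nonneg_iff_isPositive T).2 hT)
  refine (CStarAlgebra.norm_le_iff_le_algebraMap _ hδ hnonneg).2 ?_
  rw [le_def, isPositive_def']
  refine ⟨(IsSelfAdjoint.algebraMap _ (.all δ)).sub (.of_nonneg hnonneg), fun ξ => ?_⟩
  have hform : inner ℂ ((T * q) ξ) ξ = inner ℂ (T (q ξ)) (q ξ) := by
    rw [hconj]
    exact hq.isSelfAdjoint.isSymmetric _ _
  have hleq : RCLike.re (inner ℂ (T (q ξ)) (q ξ)) ≤ δ * ‖q ξ‖ ^ 2 :=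
    hle _ (L.starProjection_apply_mem ξ)
  have hnorm : δ * ‖q ξ‖ ^ 2 ≤ δ * ‖ξ‖ ^ 2 := by
    gcongr
    exact L.norm_starProjection_apply_le ξ
  simp only [reApplyInnerSelf, sub_apply, inner_sub_left, map_sub, hform,
    Algebra.algebraMap_eq_smul_one, smul_apply, one_apply_eq_self, inner_smul_left_eq_smul,
    inner_self_eq_norm_sq, RCLike.smul_re]
  linarith

/-- `T - p = T (1 - p)` and `1 - p` commutes with `T`, so `T ^ k - p = (T (1 - p)) ^ k`. -/
theorem norm_pow_sub_starProjection_le (K : Submodule ℂ H) [K.HasOrthogonalProjection]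
    {T : H →L[ℂ] H} {δ : ℝ} (hδ : 0 ≤ δ) (hT : T.IsPositive) (hfix : ∀ ξ ∈ K, T ξ = ξ)
    (hle : ∀ ξ ∈ Kᗮ, RCLike.re (inner ℂ (T ξ) ξ) ≤ δ * ‖ξ‖ ^ 2) {k : ℕ} (hk : k ≠ 0) :
    ‖T ^ k - K.starProjection‖ ≤ δ ^ k := by
  set p := K.starProjection
  have hq : Kᗮ.starProjection = 1 - p := K.starProjection_orthogonal'
  have hTp : T * p = p := by
    ext ξ
    exact hfix _ (K.starProjection_apply_mem ξ)
  have hpT : p * T = p := by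
    have hp : star p = p := (isStarProjection_starProjection (U := K)).isSelfAdjoint.star_eq
    simpa only [star_mul, hp, hT.isSelfAdjoint.star_eq] using congr_arg star hTp
  have hcomm : Commute T Kᗮ.starProjection := by
    rw [hq]; simp [Commute, SemiconjBy, mul_sub, sub_mul, hTp, hpT]
  have hpow : (T * Kᗮ.starProjection) ^ k = T ^ k - p := by
    have hTkp : ∀ n : ℕ, T ^ n * p = p := by
      intro n
      induction n with
      | zero => simp
      | succ n ih => rw [pow_succ, mul_assoc, hTp, ih]
    rw [hcomm.mul_pow, (isStarProjection_starProjection (U := Kᗮ)).isIdempotentElem.pow_eq hk,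
      hq, mul_sub, mul_one, hTkp]
  calc ‖T ^ k - p‖ = ‖(T * Kᗮ.starProjection) ^ k‖ := by rw [hpow]
    _ ≤ ‖T * Kᗮ.starProjection‖ ^ k := norm_pow_le' _ (Nat.pos_of_ne_zero hk)
    _ ≤ δ ^ k := pow_le_pow_left₀ (norm_nonneg _)
        (norm_mul_starProjection_le Kᗮ hδ hT hcomm hle) k

end Compression

theorem IsOrthoProjOnto.hasOrthogonalProjection {p : H →L[ℂ] H} {K : Submodule ℂ H}
    (hp : IsOrthoProjOnto p K) : K.HasOrthogonalProjection :=
  ⟨fun v => ⟨p v, (hp v).1, (hp v).2⟩⟩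

theorem IsOrthoProjOnto.eq_starProjection {p : H →L[ℂ] H} {K : Submodule ℂ H}
    [K.HasOrthogonalProjection] (hp : IsOrthoProjOnto p K) : p = K.starProjection :=
  ContinuousLinearMap.ext fun v => (K.eq_starProjection_of_mem_orthogonal (hp v).1 (hp v).2).symm

section MarkovOperator
variable [CompleteSpace H] {ι : Type*} [Fintype ι]

def markovOp (b : ι → H →L[ℂ] H) : H →L[ℂ] H :=
  1 - (4 * Fintype.card ι : ℂ)⁻¹ • ∑ i, star (b i) * b i

theorem re_inner_markovOp_apply_self (b : ι → H →L[ℂ] H) (ξ : H) :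
    RCLike.re (inner ℂ (markovOp b ξ) ξ) =
      ‖ξ‖ ^ 2 - (4 * Fintype.card ι : ℝ)⁻¹ * ∑ i, ‖b i ξ‖ ^ 2 := by
  have hterm : ∀ i, inner ℂ ((star (b i) * b i) ξ) ξ = ((‖b i ξ‖ ^ 2 : ℝ) : ℂ) := by
    intro i
    rw [ContinuousLinearMap.star_eq_adjoint, mul_apply_eq_comp,
      ContinuousLinearMap.adjoint_inner_left, inner_self_eq_norm_sq_to_K]
    norm_cast
  have hscalar : starRingEnd ℂ (4 * Fintype.card ι : ℂ)⁻¹ = ((4 * Fintype.card ι : ℝ)⁻¹ : ℝ) := by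
    rw [← Complex.conj_ofReal]; push_cast; rfl
  simp only [markovOp, sub_apply, smul_apply, sum_apply, one_apply_eq_self, inner_sub_left,
    inner_smul_left, sum_inner, hterm, map_sub, inner_self_eq_norm_sq, hscalar]
  rw [← Complex.ofReal_sum, ← Complex.ofReal_mul, RCLike.re_to_complex, Complex.ofReal_re]

theorem markovOp_isPositive {b : ι → H →L[ℂ] H} (hb : ∀ i, ‖b i‖ ≤ 2) :
    (markovOp b).IsPositive := by
  refine ContinuousLinearMap.isPositive_def'.2 ⟨?_, fun ξ => ?_⟩
  · have hscalar : IsSelfAdjoint (4 * Fintype.card ι : ℂ)⁻¹ := by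
      simp [IsSelfAdjoint]
    exact .sub (.one _) (hscalar.smul (isSelfAdjoint_sum _ fun i _ => .star_mul_self (b i)))
  · rw [ContinuousLinearMap.reApplyInnerSelf, re_inner_markovOp_apply_self, sub_nonneg]
    have hsum : ∑ i, ‖b i ξ‖ ^ 2 ≤ 4 * Fintype.card ι * ‖ξ‖ ^ 2 := by
      calc ∑ i, ‖b i ξ‖ ^ 2 ≤ ∑ _i : ι, (2 * ‖ξ‖) ^ 2 := by
            gcongr with i
            exact (b i).le_of_opNorm_le (hb i) ξ
        _ = 4 * Fintype.card ι * ‖ξ‖ ^ 2 := by simp; ring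
    rcases (Fintype.card ι).eq_zero_or_pos with h0 | hpos
    · simp [h0]
    · calc (4 * Fintype.card ι : ℝ)⁻¹ * ∑ i, ‖b i ξ‖ ^ 2
          ≤ (4 * Fintype.card ι : ℝ)⁻¹ * (4 * Fintype.card ι * ‖ξ‖ ^ 2) := by gcongr
        _ = ‖ξ‖ ^ 2 := by field_simp

theorem markovOp_apply_eq_self {b : ι → H →L[ℂ] H} {ξ : H} (h : ∀ i, b i ξ = 0) :
    markovOp b ξ = ξ := by
  simp [markovOp, h]

theorem re_inner_markovOp_apply_self_le {b : ι → H →L[ℂ] H} {c : ℝ} (hc : 0 ≤ c) {ξ : H}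
    (h : c * ‖ξ‖ ≤ ∑ i, ‖b i ξ‖) :
    RCLike.re (inner ℂ (markovOp b ξ) ξ) ≤
      (1 - c ^ 2 / (4 * Fintype.card ι ^ 2)) * ‖ξ‖ ^ 2 := by
  rw [re_inner_markovOp_apply_self]
  have hcs : (c * ‖ξ‖) ^ 2 ≤ Fintype.card ι * ∑ i, ‖b i ξ‖ ^ 2 :=
    (pow_le_pow_left₀ (by positivity) h 2).trans sq_sum_le_card_mul_sum_sq
  rcases (Fintype.card ι).eq_zero_or_pos with h0 | hpos
  · simp [h0]
  · have hpos' : (0 : ℝ) < Fintype.card ι := by exact_mod_cast hpos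
    have : c ^ 2 / (4 * Fintype.card ι ^ 2) * ‖ξ‖ ^ 2 ≤
        (4 * Fintype.card ι : ℝ)⁻¹ * ∑ i, ‖b i ξ‖ ^ 2 := by
      rw [div_mul_eq_mul_div, div_le_iff₀ (by positivity)]
      field_simp
      nlinarith
    linarith

theorem norm_markovOp_pow_sub_starProjection_le
    (K : Submodule ℂ H) [K.HasOrthogonalProjection] {b : ι → H →L[ℂ] H} {c : ℝ} (hc : 0 ≤ c)
    (hb : ∀ i, ‖b i‖ ≤ 2) (hK : ∀ ξ ∈ K, ∀ i, b i ξ = 0)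
    (hgap : ∀ ξ ∈ Kᗮ, c * ‖ξ‖ ≤ ∑ i, ‖b i ξ‖) {k : ℕ} (hk : k ≠ 0) :
    ‖markovOp b ^ k - K.starProjection‖ ≤ max 0 (1 - c ^ 2 / (4 * Fintype.card ι ^ 2)) ^ k :=
  norm_pow_sub_starProjection_le K (le_max_left _ _) (markovOp_isPositive hb)
    (fun ξ hξ => markovOp_apply_eq_self (hK ξ hξ))
    (fun ξ hξ => (re_inner_markovOp_apply_self_le hc (hgap ξ hξ)).trans
      (by gcongr; exact le_max_right _ _)) hk

end MarkovOperator

section MarkovMatrix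
variable [EMetricSpace X] {ι : Type*} [Fintype ι]

def markovMat (S : ι → Set (X × X)) : X → X → ℂ :=
  matOne - (4 * Fintype.card ι : ℂ)⁻¹ •
    ∑ i, matMul (matStar (defectMat (S i))) (defectMat (S i))

theorem cuElem_markovMat (hBG : BoundedGeometry X) {S : ι → Set (X × X)}
    (hS : ∀ i, IsPartialMatching (S i)) : CuElem (markovMat S) :=
  cuElem_one.sub ((cuElem_sum _ fun i =>
    (cuElem_defectMat (hS i)).matStar.matMul hBG (cuElem_defectMat (hS i))).smul _)

theorem IsRepresentation.map_markovMat [CompleteSpace H] {π : (X → X → ℂ) → (H →L[ℂ] H)}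
    (hπ : IsRepresentation π) (hBG : BoundedGeometry X) {S : ι → Set (X × X)}
    (hS : ∀ i, IsPartialMatching (S i)) :
    π (markovMat S) = markovOp fun i => π (defectMat (S i)) := by
  have hB := fun i => cuElem_defectMat (hS i)
  have hBB := fun i => (hB i).matStar.matMul hBG (hB i)
  rw [markovMat, hπ.map_sub cuElem_one ((cuElem_sum _ hBB).smul _), hπ.map_one,
    hπ.map_smul _ _ (cuElem_sum _ hBB), hπ.map_sum _ hBB, markovOp]
  simp only [hπ.map_mul _ _ (hB _).matStar (hB _), hπ.map_matStar (hB _)]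

theorem markovMat_apply [Nonempty ι] {S : ι → Set (X × X)}
    (hS : ∀ i, IsPartialMatching (S i)) (x y : X) :
    markovMat S x y = (4 * Fintype.card ι : ℂ)⁻¹ * ∑ i,
      ((if x = y then 4 - rowInd (S i) x - colInd (S i) x else 0) +
        ind (S i) x y + ind (S i) y x) := by
  have hn : (4 * Fintype.card ι : ℂ) ≠ 0 := by simp [Fintype.card_ne_zero]
  simp only [markovMat, Pi.sub_apply, Pi.smul_apply, Finset.sum_apply, smul_eq_mul,
    (hS _).matStar_defectMat_mul_apply, matOne]
  split_ifs
  · field_simp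
    simp [Finset.sum_add_distrib, Finset.sum_sub_distrib]
    ring
  · simp [Finset.sum_add_distrib, Finset.sum_sub_distrib]
    ring

end MarkovMatrix

section MarkovMatrixEntries
variable [EMetricSpace X] {ι : Type*} [Fintype ι] [Nonempty ι]
open scoped ComplexOrder

theorem markovMat_nonneg {S : ι → Set (X × X)} (hS : ∀ i, IsPartialMatching (S i)) (x y : X) :
    0 ≤ markovMat S x y := by
  have h01 : ∀ z : ℂ, z = 0 ∨ z = 1 → 0 ≤ z ∧ z ≤ 1 := by
    rintro z (rfl | rfl) <;> norm_num
  rw [markovMat_apply hS]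
  refine mul_nonneg (by positivity) (Finset.sum_nonneg fun i _ => ?_)
  have hr := h01 _ (rowInd_eq_zero_or_eq_one (S i) x)
  have hc := h01 _ (rowInd_eq_zero_or_eq_one (Prod.swap ⁻¹' S i) x)
  have hxy := h01 _ (ind_eq_zero_or_eq_one (S i) x y)
  have hyx := h01 _ (ind_eq_zero_or_eq_one (S i) y x)
  have hdiag : 0 ≤ if x = y then 4 - rowInd (S i) x - colInd (S i) x else 0 := by
    split_ifs
    · simp only [colInd]
      have : (2 : ℂ) ≤ 4 - rowInd (S i) x - rowInd (Prod.swap ⁻¹' S i) x := by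
        linear_combination hr.2 + hc.2
      exact le_trans (by norm_num) this
    · exact le_rfl
  exact add_nonneg (add_nonneg hdiag hxy.1) hyx.1

theorem markovMat_symm {S : ι → Set (X × X)} (hS : ∀ i, IsPartialMatching (S i)) (x y : X) :
    markovMat S x y = markovMat S y x := by
  rw [markovMat_apply hS, markovMat_apply hS]
  by_cases h : x = y
  · subst h; rfl
  · simp only [if_neg h, if_neg (Ne.symm h), zero_add, add_comm (ind _ x y)]

theorem hasSum_markovMat_row {S : ι → Set (X × X)} (hS : ∀ i, IsPartialMatching (S i))
    (x : X) :
    HasSum (fun y => markovMat S x y) 1 := by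
  have hterm : ∀ i, HasSum (fun y => (if x = y then 4 - rowInd (S i) x - colInd (S i) x else 0)
      + ind (S i) x y + ind (S i) y x) 4 := fun i => by
    convert ((hasSum_ite_eq x (4 - rowInd (S i) x - colInd (S i) x)).add
      ((hS i).hasSum_ind_row x)).add ((hS i).hasSum_ind_col x) using 1
    · ext y; simp only [eq_comm]
    · ring
  have hn : (4 * Fintype.card ι : ℂ) ≠ 0 := by simp [Fintype.card_ne_zero]
  simp_rw [markovMat_apply hS]
  have h := (hasSum_sum (s := Finset.univ) fun i _ => hterm i).mul_left
    (4 * Fintype.card ι : ℂ)⁻¹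
  rwa [Finset.sum_const, Finset.card_univ, nsmul_eq_mul, mul_comm (Fintype.card ι : ℂ),
    inv_mul_cancel₀ hn] at h

theorem memAX_markovMat (hBG : BoundedGeometry X) {S : ι → Set (X × X)}
    (hS : ∀ i, IsPartialMatching (S i)) : MemAX (markovMat S) 1 :=
  ⟨cuElem_markovMat hBG hS, fun x => ⟨hasSum_markovMat_row hS x, by
    simpa only [markovMat_symm hS _ x] using hasSum_markovMat_row hS x⟩⟩

end MarkovMatrixEntries

/-- If a space `X` has Property (T), then there are `A ∈ (A_X^+)_1`
and `0 ≤ δ < 1` such that for every representation `π` of `ℂ_u[X]`,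
`‖π(A^k) - p_π‖ ≤ δ^k` for all `k ≥ 1`. -/
theorem statement0 {X : Type*} [EMetricSpace X] (hX : IsSpace X) (hT : HasPropertyT X) :
    ∃ A : X → X → ℂ, MemAX A 1 ∧ (∀ x y : X, 0 ≤ (A x y).re ∧ (A x y).im = 0) ∧
      ∃ δ : ℝ, 0 ≤ δ ∧ δ < 1 ∧
        ∀ (H : Type) [NormedAddCommGroup H] [InnerProductSpace ℂ H] [CompleteSpace H]
          (π : (X → X → ℂ) → (H →L[ℂ] H)), IsRepresentation π →
          ∀ p : H →L[ℂ] H, IsOrthoProjOnto p (invariantSubmodule π) →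
            ∀ k : ℕ, 1 ≤ k → ‖π (matPow A k) - p‖ ≤ δ ^ k := by
  have hBG := hX.boundedGeometry
  obtain ⟨E, hE⟩ := hX.monogenic
  obtain ⟨N, S, hS, hcover⟩ := hBG.exists_partialMatching_cover hE.1
  obtain ⟨c, hc, hgap⟩ := hT.exists_pos_le_sum_norm_map_defectMat hBG hE hS hcover
  refine ⟨markovMat S, memAX_markovMat hBG hS, fun x y => ?_,
    max 0 (1 - c ^ 2 / (4 * Fintype.card (Fin (N + 1) × Fin (N + 1)) ^ 2)), le_max_left _ _,
    max_lt one_pos ?_, fun H _ _ _ π hπ p hp k hk => ?_⟩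
  · obtain ⟨hre, him⟩ := Complex.nonneg_iff.1 (markovMat_nonneg hS x y)
    exact ⟨hre, him.symm⟩
  · have : 0 < c ^ 2 / (4 * Fintype.card (Fin (N + 1) × Fin (N + 1)) ^ 2 : ℝ) := by positivity
    linarith
  · have := hp.hasOrthogonalProjection
    rw [hp.eq_starProjection, hπ.map_matPow hBG (cuElem_markovMat hBG hS),
      hπ.map_markovMat hBG hS]
    exact norm_markovOp_pow_sub_starProjection_le _ hc.le
      (fun i => hπ.norm_map_defectMat_le (hS i))
      (fun ξ hξ i => hπ.map_defectMat_apply_eq_zero (hS i) hξ) (hgap H π hπ) (by omega)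

end GeomPropT
end
end

section
/- Let X be a finite nonempty metric space (with finite-valued distance, so that X is a finite, coarsely connected space). Then X has Property (T), and the matrix P ∈ ℂ_u[X] defined by P_{x,y} = 1/|X| for all x,y ∈ X satisfies: for every representation π of ℂ_u[X] on a complex Hilbert space H, π(P) is the orthogonal projection of H onto the subspace H^π of invariant vectors. -/
open scoped ENNReal Classical

noncomputable section

namespace GeomPropT

variable {X : Type*}

variable {H : Type*} [NormedAddCommGroup H] [InnerProductSpace ℂ H]

/-!
When `X` is finite and coarsely connected, every matrix lies in `ℂ_u[X]`, so a representation
`π` is a `⋆`-homomorphism on the full matrix algebra. The averaging matrix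
`P = |X|⁻¹ ∑ e_ab` is self-adjoint and satisfies `v P = v v* P` for every partial translation
`v` (both sides only see row sums, and `v` and `v v*` have the same row sums); hence `π P` maps
`H` into `H^π`, and it fixes `H^π` because invariant vectors satisfy `π e_ab ξ = π e_aa ξ`.
So `π P` is the orthogonal projection onto `H^π`.

For `ξ ⊥ H^π` we get `π P ξ = 0`, i.e. `ξ = |X|⁻¹ ∑_{a,b} (π e_aa ξ - π e_ab ξ)`. If
`X × X ⊆ E^{∘(n+1)}`, telescoping along a chain of `E`-steps, with the partial isometries
`π e_ab` as contractions, bounds every summand by `n + 1` times the largest defect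
`‖π e_ab ξ - π e_aa ξ‖` over `(a, b) ∈ E`. Hence some defect is at least
`(2 |X| (n + 1))⁻¹ ‖ξ‖`.
-/

open Matrix

theorem norm_le_one_of_isStarProjection_star_mul_self {A : Type*} [NormedRing A] [StarRing A]
    [CStarRing A] {a : A} (h : IsStarProjection (star a * a)) : ‖a‖ ≤ 1 := by
  have := h.norm_le
  rw [CStarRing.norm_star_mul_self] at this
  nlinarith [norm_nonneg a]

theorem IsOrthoProjOnto.apply_eq_zero {p : H →L[ℂ] H} {S : Submodule ℂ H}
    (hp : IsOrthoProjOnto p S) {ξ : H} (hξ : ξ ∈ Sᗮ) : p ξ = 0 := by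
  have hξ' : p ξ ∈ Sᗮ := by simpa using Sᗮ.sub_mem hξ (hp ξ).2
  exact (Submodule.mem_bot ℂ).1 (S.inf_orthogonal_eq_bot ▸ ⟨(hp ξ).1, hξ'⟩)

theorem matStar_eq_conjTranspose (T : Matrix X X ℂ) : matStar T = Tᴴ := rfl

theorem matMul_eq_mul [Fintype X] (T S : Matrix X X ℂ) :
    matMul T S = (T * S : Matrix X X ℂ) := by
  ext x y
  simp [matMul, mul_apply]

theorem matMul_single_matStar_single [Fintype X] (a b : X) :
    matMul (single a b (1 : ℂ)) (matStar (single a b 1)) = single a a 1 :=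
  (matMul_eq_mul _ _).trans <| by
    change (single a b 1 * (single a b 1)ᴴ : Matrix X X ℂ) = single a a 1
    rw [conjTranspose_single, single_mul_single_same, star_one, mul_one]

theorem matSupport_single_subset (a b : X) (c : ℂ) : matSupport (single a b c) ⊆ {(a, b)} :=
  fun p hp => by
    by_contra hne
    exact hp (single_apply_of_ne _ _ _ _ _ fun h => hne (Prod.ext h.1.symm h.2.symm))

section PartialTranslation

variable [EMetricSpace X]

theorem controlled_of_edist_lt_top [Finite X] (hcc : ∀ x y : X, edist x y < ⊤)
    (E : Set (X × X)) : Controlled E := by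
  have := Fintype.ofFinite X
  refine ⟨Finset.univ.sup fun p : X × X => edist p.1 p.2, ?_,
    fun p _ => Finset.le_sup (f := fun p : X × X => edist p.1 p.2) (Finset.mem_univ p)⟩
  exact (Finset.sup_lt_iff ENNReal.zero_lt_top).2 fun p _ => hcc p.1 p.2

theorem cuElem_of_edist_lt_top [Finite X] (hcc : ∀ x y : X, edist x y < ⊤)
    (T : X → X → ℂ) : CuElem T := by
  obtain ⟨M, hM⟩ := Finite.exists_le fun p : X × X => ‖T p.1 p.2‖
  exact ⟨⟨M, fun x y => hM (x, y)⟩, controlled_of_edist_lt_top hcc _⟩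

theorem isPartialTranslation_zero : IsPartialTranslation (0 : X → X → ℂ) :=
  ⟨fun _ _ => Or.inl rfl, fun _ _ _ h _ => absurd h zero_ne_one,
    fun _ _ _ h _ => absurd h zero_ne_one, ⟨0, ENNReal.zero_lt_top, fun _ hp => absurd rfl hp⟩⟩

theorem isPartialTranslation_single [Finite X] (hcc : ∀ x y : X, edist x y < ⊤) (a b : X) :
    IsPartialTranslation (single a b (1 : ℂ)) := by
  have hone : ∀ x y, single a b (1 : ℂ) x y = 1 → a = x ∧ b = y := fun x y h => by
    by_contra hne
    simp [single_apply_of_ne _ _ _ _ _ hne] at h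
  refine ⟨fun x y => ?_, fun x y y' h h' => (hone x y h).2.symm.trans (hone x y' h').2,
    fun x x' y h h' => (hone x y h).1.symm.trans (hone x' y h').1,
    controlled_of_edist_lt_top hcc _⟩
  rw [single_apply]
  split_ifs <;> simp

theorem IsPartialTranslation.mul_star_apply {v : X → X → ℂ} (hv : IsPartialTranslation v)
    (x z w : X) : v x w * star (v z w) = if z = x then v x w else 0 := by
  split_ifs with hzx
  · subst hzx
    rcases hv.1 z w with h | h <;> simp [h]
  · rcases hv.1 x w with h | h
    · simp [h]
    · rcases hv.1 z w with h' | h'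
      · simp [h']
      · exact absurd (hv.2.2.1 z x w h' h) hzx

theorem IsPartialTranslation.sum_mul_conjTranspose_apply [Fintype X] {v : Matrix X X ℂ}
    (hv : IsPartialTranslation v) (x : X) : ∑ z, (v * vᴴ) x z = ∑ z, v x z := by
  simp only [mul_apply, conjTranspose_apply, hv.mul_star_apply]
  rw [Finset.sum_comm]
  simp

end PartialTranslation

def IsRepresentation.toStarAlgHom [EMetricSpace X] [Fintype X] [CompleteSpace H]
    {π : (X → X → ℂ) → (H →L[ℂ] H)} (hcc : ∀ x y : X, edist x y < ⊤)
    (hπ : IsRepresentation π) : Matrix X X ℂ →⋆ₐ[ℂ] (H →L[ℂ] H) where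
  toFun := π
  map_one' := hπ.map_one
  map_mul' T S := by
    rw [← matMul_eq_mul]
    exact hπ.map_mul T S (cuElem_of_edist_lt_top hcc _) (cuElem_of_edist_lt_top hcc _)
  map_zero' := (by simpa using hπ.map_smul 0 0 (cuElem_of_edist_lt_top hcc _) : π 0 = 0)
  map_add' T S := hπ.map_add T S (cuElem_of_edist_lt_top hcc _) (cuElem_of_edist_lt_top hcc _)
  commutes' c := by
    simp only [Algebra.algebraMap_eq_smul_one]
    exact (hπ.map_smul c matOne (cuElem_of_edist_lt_top hcc _)).trans (by rw [hπ.map_one])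
  map_star' T := by
    rw [star_eq_conjTranspose, ← matStar_eq_conjTranspose,
      hπ.map_star T (cuElem_of_edist_lt_top hcc _), ContinuousLinearMap.star_eq_adjoint]

@[simp]
theorem IsRepresentation.toStarAlgHom_apply [EMetricSpace X] [Fintype X] [CompleteSpace H]
    {π : (X → X → ℂ) → (H →L[ℂ] H)} (hcc : ∀ x y : X, edist x y < ⊤)
    (hπ : IsRepresentation π) (T : Matrix X X ℂ) : hπ.toStarAlgHom hcc T = π T := rfl

def meanMatrix (X : Type*) : Matrix X X ℂ := of fun _ _ => (Nat.card X : ℂ)⁻¹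

theorem isSelfAdjoint_meanMatrix : IsSelfAdjoint (meanMatrix X) := by
  ext x y
  simp [meanMatrix]

theorem meanMatrix_eq_sum_single [Fintype X] :
    meanMatrix X = (Nat.card X : ℂ)⁻¹ • ∑ a : X, ∑ b : X, single a b 1 := by
  rw [matrix_eq_sum_single (meanMatrix X)]
  simp [meanMatrix, Finset.smul_sum, smul_single]

theorem IsPartialTranslation.mul_meanMatrix [EMetricSpace X] [Fintype X] {v : Matrix X X ℂ}
    (hv : IsPartialTranslation v) : v * meanMatrix X = v * vᴴ * meanMatrix X := by
  ext x y
  rw [mul_apply, mul_apply]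
  simp only [meanMatrix, of_apply, ← Finset.sum_mul, hv.sum_mul_conjTranspose_apply]

section MatrixRepresentation

variable [Fintype X] [CompleteSpace H] (ρ : Matrix X X ℂ →⋆ₐ[ℂ] (H →L[ℂ] H))

theorem norm_map_single_one_le (a b : X) : ‖ρ (single a b 1)‖ ≤ 1 := by
  have hp : IsStarProjection (single b b (1 : ℂ)) :=
    ⟨by simp [IsIdempotentElem],
      by simp [IsSelfAdjoint, star_eq_conjTranspose, conjTranspose_single]⟩
  refine norm_le_one_of_isStarProjection_star_mul_self ?_
  rw [← map_star, ← map_mul, star_eq_conjTranspose, conjTranspose_single, star_one,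
    single_mul_single_same, one_mul]
  exact hp.map ρ

theorem map_single_one_apply_map_single_one (a b c : X) (ξ : H) :
    ρ (single a b 1) (ρ (single b c 1) ξ) = ρ (single a c 1) ξ := by
  rw [← mul_apply_eq_comp, ← map_mul, single_mul_single_same, one_mul]

theorem norm_map_single_sub_le_of_mem_compPow {ξ : H} {E : Set (X × X)} {r : ℝ}
    (hE : ∀ p ∈ E, ‖ρ (single p.1 p.2 1) ξ - ρ (single p.1 p.1 1) ξ‖ ≤ r) (n : ℕ) :
    ∀ p ∈ compPow E n, ‖ρ (single p.1 p.2 1) ξ - ρ (single p.1 p.1 1) ξ‖ ≤ (n + 1) * r := by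
  induction n with
  | zero => exact fun p hp => by simpa using hE p hp
  | succ n ih =>
    rintro ⟨a, b⟩ ⟨z, haz, hzb⟩
    have hsplit : ρ (single a b 1) ξ - ρ (single a a 1) ξ =
        ρ (single a z 1) (ρ (single z b 1) ξ - ρ (single z z 1) ξ) +
          (ρ (single a z 1) ξ - ρ (single a a 1) ξ) := by
      rw [map_sub, map_single_one_apply_map_single_one, map_single_one_apply_map_single_one]
      abel
    have hcontr :
        ‖ρ (single a z 1) (ρ (single z b 1) ξ - ρ (single z z 1) ξ)‖ ≤ (n + 1) * r :=
      calc _ ≤ 1 * ‖ρ (single z b 1) ξ - ρ (single z z 1) ξ‖ :=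
            (ρ (single a z 1)).le_of_opNorm_le (norm_map_single_one_le ρ a z) _
        _ ≤ (n + 1) * r := (one_mul _).trans_le (ih _ hzb)
    rw [hsplit]
    calc _ ≤ (n + 1) * r + r := norm_add_le_of_le hcontr (hE _ haz)
      _ = ((n + 1 : ℕ) + 1) * r := by push_cast; ring

variable [Nonempty X]

theorem map_meanMatrix_apply_sub_self (ξ : H) :
    ρ (meanMatrix X) ξ - ξ =
      (Nat.card X : ℂ)⁻¹ • ∑ a : X, ∑ b : X, (ρ (single a b 1) ξ - ρ (single a a 1) ξ) := by
  have hξ : ∑ a : X, ∑ _b : X, ρ (single a a 1) ξ = (Nat.card X : ℂ) • ξ := by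
    simp only [Finset.sum_const, Finset.card_univ, ← Nat.card_eq_fintype_card,
      ← Nat.cast_smul_eq_nsmul ℂ, ← Finset.smul_sum, ← _root_.sum_apply,
      ← map_sum, sum_single_one, map_one, one_apply_eq_self]
  have hN : (Nat.card X : ℂ) ≠ 0 := Nat.cast_ne_zero.2 Nat.card_pos.ne'
  simp only [Finset.sum_sub_distrib, smul_sub, hξ, smul_smul, inv_mul_cancel₀ hN, one_smul,
    meanMatrix_eq_sum_single, map_smul, map_sum, _root_.smul_apply, _root_.sum_apply]

theorem norm_le_of_map_meanMatrix_apply_eq_zero {ξ : H} (hξ : ρ (meanMatrix X) ξ = 0)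
    {E : Set (X × X)} {n : ℕ} (hn : Set.univ ⊆ compPow E n) {r : ℝ}
    (hE : ∀ p ∈ E, ‖ρ (single p.1 p.2 1) ξ - ρ (single p.1 p.1 1) ξ‖ ≤ r) :
    ‖ξ‖ ≤ Nat.card X * (n + 1) * r := by
  have hpair (a b : X) : ‖ρ (single a b 1) ξ - ρ (single a a 1) ξ‖ ≤ (n + 1) * r :=
    norm_map_single_sub_le_of_mem_compPow ρ hE n (a, b) (hn trivial)
  calc ‖ξ‖ = ‖ρ (meanMatrix X) ξ - ξ‖ := by rw [hξ, zero_sub, norm_neg]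
    _ ≤ (Nat.card X : ℝ)⁻¹ *
          ∑ a : X, ∑ b : X, ‖ρ (single a b 1) ξ - ρ (single a a 1) ξ‖ := by
      rw [map_meanMatrix_apply_sub_self, norm_smul, norm_inv, Complex.norm_natCast]
      gcongr
      exact (norm_sum_le _ _).trans (Finset.sum_le_sum fun a _ => norm_sum_le _ _)
    _ ≤ (Nat.card X : ℝ)⁻¹ * ∑ _a : X, ∑ _b : X, (n + 1) * r := by
      gcongr with a _ b
      exact hpair a b
    _ = Nat.card X * (n + 1) * r := by
      simp only [Finset.sum_const, Finset.card_univ, ← Nat.card_eq_fintype_card, nsmul_eq_mul]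
      field_simp

end MatrixRepresentation

theorem map_single_one_apply_of_mem_invariantSubmodule [EMetricSpace X] [Fintype X]
    {π : (X → X → ℂ) → (H →L[ℂ] H)} (hcc : ∀ x y : X, edist x y < ⊤)
    {η : H} (hη : η ∈ invariantSubmodule π) (a b : X) :
    π (single a b 1) η = π (single a a 1) η := by
  simpa [matMul_single_matStar_single] using hη _ (isPartialTranslation_single hcc a b)

section Representation

variable [EMetricSpace X] [Fintype X] [CompleteSpace H] {π : (X → X → ℂ) → (H →L[ℂ] H)}

theorem map_meanMatrix_apply_mem_invariantSubmodule (hcc : ∀ x y : X, edist x y < ⊤)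
    (hπ : IsRepresentation π) (ξ : H) : π (meanMatrix X) ξ ∈ invariantSubmodule π := by
  rintro (v : Matrix X X ℂ) hv
  have h := congr($(congrArg (hπ.toStarAlgHom hcc) hv.mul_meanMatrix) ξ)
  rw [map_mul, map_mul _ (v * vᴴ), mul_apply_eq_comp, mul_apply_eq_comp, ← matMul_eq_mul,
    ← matStar_eq_conjTranspose] at h
  exact h

variable [Nonempty X]

theorem map_meanMatrix_apply_of_mem_invariantSubmodule (hcc : ∀ x y : X, edist x y < ⊤)
    (hπ : IsRepresentation π) {η : H} (hη : η ∈ invariantSubmodule π) :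
    π (meanMatrix X) η = η := by
  have h := map_meanMatrix_apply_sub_self (hπ.toStarAlgHom hcc) η
  simp only [IsRepresentation.toStarAlgHom_apply,
    map_single_one_apply_of_mem_invariantSubmodule hcc hη, sub_self, Finset.sum_const_zero,
    smul_zero] at h
  exact sub_eq_zero.1 h

theorem isOrthoProjOnto_map_meanMatrix (hcc : ∀ x y : X, edist x y < ⊤)
    (hπ : IsRepresentation π) : IsOrthoProjOnto (π (meanMatrix X)) (invariantSubmodule π) := by
  refine fun ξ => ⟨map_meanMatrix_apply_mem_invariantSubmodule hcc hπ ξ, ?_⟩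
  rw [Submodule.mem_orthogonal]
  intro η hη
  have hsa : ContinuousLinearMap.adjoint (π (meanMatrix X)) = π (meanMatrix X) := by
    rw [← ContinuousLinearMap.star_eq_adjoint]
    exact (isSelfAdjoint_meanMatrix.map (hπ.toStarAlgHom hcc)).star_eq
  rw [inner_sub_right, ← ContinuousLinearMap.adjoint_inner_left, hsa,
    map_meanMatrix_apply_of_mem_invariantSubmodule hcc hπ hη, sub_self]

end Representation

theorem hasPropertyT_of_finite [EMetricSpace X] [Finite X] [Nonempty X]
    (hcc : ∀ x y : X, edist x y < ⊤) : HasPropertyT X := by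
  have := Fintype.ofFinite X
  intro E hE
  obtain ⟨n, hn⟩ := hE.2 Set.univ (controlled_of_edist_lt_top hcc _)
  have hN : (0 : ℝ) < Nat.card X := Nat.cast_pos.2 Nat.card_pos
  set c : ℝ := (2 * Nat.card X * (n + 1))⁻¹ with hc
  refine ⟨c, by positivity, fun H _ _ _ π hπ ξ hξ => ?_⟩
  by_cases hξ0 : ξ = 0
  · exact ⟨0, isPartialTranslation_zero, fun _ hp => absurd rfl hp, by simp [hξ0]⟩
  by_contra! hsmall
  have hedge (p : X × X) (hp : p ∈ E) :
      ‖hπ.toStarAlgHom hcc (single p.1 p.2 1) ξ - hπ.toStarAlgHom hcc (single p.1 p.1 1) ξ‖ ≤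
        c * ‖ξ‖ := by
    have h := hsmall _ (isPartialTranslation_single hcc p.1 p.2)
      ((matSupport_single_subset _ _ _).trans (Set.singleton_subset_iff.2 hp))
    rw [matMul_single_matStar_single] at h
    exact h.le
  have hle := norm_le_of_map_meanMatrix_apply_eq_zero (hπ.toStarAlgHom hcc)
    ((isOrthoProjOnto_map_meanMatrix hcc hπ).apply_eq_zero hξ) hn hedge
  have hpos := norm_pos_iff.2 hξ0
  rw [hc] at hle
  field_simp at hle
  linarith

/-- A finite nonempty coarsely connected metric space has
Property (T), and the matrix with all entries `1/|X|` maps, under every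
representation `π`, to the orthogonal projection onto `H^π`. -/
theorem statement3 {X : Type*} [EMetricSpace X] [Finite X] [Nonempty X]
    (hcc : ∀ x y : X, edist x y < ⊤) :
    HasPropertyT X ∧
      ∀ (H : Type) [NormedAddCommGroup H] [InnerProductSpace ℂ H] [CompleteSpace H]
        (π : (X → X → ℂ) → (H →L[ℂ] H)), IsRepresentation π →
        IsOrthoProjOnto (π (fun _ _ => ((Nat.card X : ℂ))⁻¹)) (invariantSubmodule π) := by
  have := Fintype.ofFinite X
  exact ⟨hasPropertyT_of_finite hcc, fun H _ _ _ π hπ => isOrthoProjOnto_map_meanMatrix hcc hπ⟩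

end GeomPropT
end
end
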